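/- Let G be a locally compact Hausdorff groupoid and H ⊆ G a subgroupoid whose unit space H^(0) is closed in G^(0). If H is a proper groupoid, then H is closed in G. -/
import Mathlib


open MeasureTheory Topology Filter
open scoped ENNReal

universe u v

/-- A locally compact Hausdorff groupoid, modelled as a type `G` with a partially
defined multiplication (via the composability predicate `Comp`), an inversion,
and continuity of the structure maps. -/
structure TopGroupoid (G : Type u) [TopologicalSpace G] where
  mul : G → G → G
  inv : G → G
  Comp : G → G → Prop
  inv_inv : ∀ g, inv (inv g) = g
  comp_inv : ∀ g, Comp g (inv g)
  comp_iff : ∀ g h, Comp g h ↔ mul (inv g) g = mul h (inv h)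
  assoc : ∀ g₁ g₂ g₃, Comp g₁ g₂ → Comp g₂ g₃ →
    Comp (mul g₁ g₂) g₃ ∧ Comp g₁ (mul g₂ g₃) ∧
      mul (mul g₁ g₂) g₃ = mul g₁ (mul g₂ g₃)
  inv_mul_cancel_left : ∀ g h, Comp g h → mul (inv g) (mul g h) = h
  mul_inv_cancel_right : ∀ g h, Comp g h → mul (mul g h) (inv h) = g
  dmul : ∀ g h, Comp g h → mul (inv (mul g h)) (mul g h) = mul (inv h) h
  rmul : ∀ g h, Comp g h → mul (mul g h) (inv (mul g h)) = mul g (inv g)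
  continuous_inv : Continuous inv
  continuous_mul : Continuous fun p : {p : G × G // Comp p.1 p.2} => mul p.1.1 p.1.2

namespace TopGroupoid

variable {G : Type u} [TopologicalSpace G] (𝒢 : TopGroupoid G)

/-- The domain map `d(g) = g⁻¹ g`. -/
def d (g : G) : G := 𝒢.mul (𝒢.inv g) g

/-- The range map `r(g) = g g⁻¹`. -/
def r (g : G) : G := 𝒢.mul g (𝒢.inv g)

/-- The unit space `G⁽⁰⁾ = {g | g = g⁻¹ = g²}`. -/
def units : Set G := {g | 𝒢.inv g = g ∧ 𝒢.mul g g = g}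

theorem comp_iff' (g h : G) : 𝒢.Comp g h ↔ 𝒢.d g = 𝒢.r h := 𝒢.comp_iff g h

theorem d_inv (g : G) : 𝒢.d (𝒢.inv g) = 𝒢.r g := by
  simp only [d, r, 𝒢.inv_inv]

theorem r_inv (g : G) : 𝒢.r (𝒢.inv g) = 𝒢.d g := by
  simp only [d, r, 𝒢.inv_inv]

theorem d_mul {g h : G} (hc : 𝒢.Comp g h) : 𝒢.d (𝒢.mul g h) = 𝒢.d h := 𝒢.dmul g h hc

theorem r_mul {g h : G} (hc : 𝒢.Comp g h) : 𝒢.r (𝒢.mul g h) = 𝒢.r g := 𝒢.rmul g h hc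

theorem comp_inv_right {g h : G} (hd : 𝒢.d g = 𝒢.d h) : 𝒢.Comp g (𝒢.inv h) := by
  rw [𝒢.comp_iff', 𝒢.r_inv]; exact hd

theorem comp_inv_left {g h : G} (hr : 𝒢.r g = 𝒢.r h) : 𝒢.Comp (𝒢.inv g) h := by
  rw [𝒢.comp_iff', 𝒢.d_inv]; exact hr

/-- `G` is étale if the domain map is a local homeomorphism. -/
def Etale : Prop := IsLocalHomeomorph 𝒢.d

/-- An open bisection: an open set on which both `d` and `r` restrict to
homeomorphisms onto open subsets. -/
def IsBisection (U : Set G) : Prop :=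
  IsOpen U ∧ IsOpenEmbedding (U.restrict 𝒢.d) ∧ IsOpenEmbedding (U.restrict 𝒢.r)

/-- `G` is ample if the compact open bisections form a basis of the topology. -/
def Ample : Prop :=
  TopologicalSpace.IsTopologicalBasis {U : Set G | 𝒢.IsBisection U ∧ IsCompact U}

/-- A subgroupoid: a subset closed under inversion and (composable) products. -/
def IsSubgroupoid (H : Set G) : Prop :=
  (∀ g ∈ H, 𝒢.inv g ∈ H) ∧ ∀ g h, g ∈ H → h ∈ H → 𝒢.Comp g h → 𝒢.mul g h ∈ H

theorem comp_inv_self (g : G) : 𝒢.Comp (𝒢.inv g) g := by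
  rw [𝒢.comp_iff', 𝒢.d_inv]

theorem d_mem_units (g : G) : 𝒢.d g ∈ 𝒢.units := by
  have hc : 𝒢.Comp (𝒢.inv g) g := 𝒢.comp_inv_self g
  have hd : 𝒢.d (𝒢.d g) = 𝒢.d g := 𝒢.d_mul hc
  have hr : 𝒢.r (𝒢.d g) = 𝒢.d g := by
    have := 𝒢.r_mul hc
    rwa [𝒢.r_inv] at this
  set u := 𝒢.d g with hu
  have hcu : 𝒢.Comp (𝒢.inv u) u := 𝒢.comp_inv_self u
  have hinv : 𝒢.inv u = u := by
    have := 𝒢.mul_inv_cancel_right (𝒢.inv u) u hcu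
    rw [show 𝒢.mul (𝒢.inv u) u = 𝒢.d u from rfl, hd] at this
    rw [← this, show 𝒢.mul u (𝒢.inv u) = 𝒢.r u from rfl, hr]
  have hmul : 𝒢.mul u u = u := by
    have := 𝒢.inv_mul_cancel_left (𝒢.inv u) u hcu
    rw [𝒢.inv_inv, show 𝒢.mul (𝒢.inv u) u = 𝒢.d u from rfl, hd] at this
    exact this
  exact ⟨hinv, hmul⟩

theorem r_mem_units (g : G) : 𝒢.r g ∈ 𝒢.units := by
  rw [← 𝒢.d_inv]; exact 𝒢.d_mem_units _

theorem continuous_d : Continuous 𝒢.d := by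
  have : Continuous fun g : G => ((⟨(𝒢.inv g, g), 𝒢.comp_inv_self g⟩ :
      {p : G × G // 𝒢.Comp p.1 p.2})) :=
    Continuous.subtype_mk (𝒢.continuous_inv.prodMk continuous_id) _
  exact 𝒢.continuous_mul.comp this

theorem continuous_r : Continuous 𝒢.r :=
  (𝒢.continuous_d.comp 𝒢.continuous_inv).congr fun g => (𝒢.d_inv g).symm ▸ rfl

end TopGroupoid


/-- A proper subgroupoid `H` of a locally compact Hausdorff groupoid
whose unit space `H⁽⁰⁾ = G⁽⁰⁾ ∩ H` is closed is itself closed in `G`. -/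
theorem proper_subgroupoid_isClosed {G : Type u} [TopologicalSpace G] [T2Space G]
    [LocallyCompactSpace G] (𝒢 : TopGroupoid G) (H : Set G)
    (hH : 𝒢.IsSubgroupoid H) (hH0 : IsClosed (𝒢.units ∩ H))
    (hproper : ∀ K : Set G, K ⊆ 𝒢.units ∩ H → IsCompact K →
      IsCompact {h | h ∈ H ∧ 𝒢.d h ∈ K ∧ 𝒢.r h ∈ K}) :
    IsClosed H := by
  rw [← closure_subset_iff_isClosed]
  intro g hg
  obtain ⟨V, hVc, hVn⟩ := exists_compact_mem_nhds g
  set K := (𝒢.units ∩ H) ∩ (𝒢.d '' V ∪ 𝒢.r '' V) with hK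
  have hKc : IsCompact K :=
    ((hVc.image 𝒢.continuous_d).union (hVc.image 𝒢.continuous_r)).inter_left hH0
  have hL : IsCompact {h | h ∈ H ∧ 𝒢.d h ∈ K ∧ 𝒢.r h ∈ K} :=
    hproper K Set.inter_subset_left hKc
  have hsub : V ∩ H ⊆ {h | h ∈ H ∧ 𝒢.d h ∈ K ∧ 𝒢.r h ∈ K} := by
    rintro h ⟨hhV, hhH⟩
    have hdH : 𝒢.d h ∈ H := hH.2 _ _ (hH.1 h hhH) hhH (𝒢.comp_inv_self h)
    have hrH : 𝒢.r h ∈ H := by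
      rw [← 𝒢.d_inv]
      exact hH.2 _ _ (hH.1 _ (hH.1 h hhH)) (hH.1 h hhH) (𝒢.comp_inv_self _)
    exact ⟨hhH, ⟨⟨𝒢.d_mem_units h, hdH⟩, Or.inl ⟨h, hhV, rfl⟩⟩,
      ⟨⟨𝒢.r_mem_units h, hrH⟩, Or.inr ⟨h, hhV, rfl⟩⟩⟩
  have hgcl : g ∈ closure (V ∩ H) := by
    rw [mem_closure_iff_nhds] at hg ⊢
    intro t ht
    obtain ⟨x, hx⟩ := hg (t ∩ V) (inter_mem ht hVn)
    exact ⟨x, hx.1.1, hx.1.2, hx.2⟩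
  have := hL.isClosed.closure_subset_iff.mpr hsub hgcl
  exact this.1
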